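/- arXiv:2503.03762 — 7 statements merged into one kernel-verified Lean document; each statement's English description precedes it below -/
import Mathlib

section
/- Let C be an F[x]-submodule of V = R_1 × ⋯ × R_ℓ generated by elements g_1, …, g_ρ ∈ V, and for each 1 ≤ i ≤ ℓ let g_i(x) be the monic gcd in F[x] of x^{m_i} − λ_i together with polynomial representatives of π_i(g_1), …, π_i(g_ρ) (so that π_i(C) is the ideal of R_i generated by the image of g_i(x)). If the polynomials (x^{m_1} − λ_1)/g_1(x), (x^{m_2} − λ_2)/g_2(x), …, (x^{m_ℓ} − λ_ℓ)/g_ℓ(x) are pairwise coprime in F[x], then C = π_1(C) × ⋯ × π_ℓ(C); that is, an element (a_1, …, a_ℓ) of V lies in C if and only if a_i ∈ π_i(C) for every 1 ≤ i ≤ ℓ. -/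
/-!
Suppose `hᵢ` annihilates the projection `πᵢ(C)` and the `hᵢ` are pairwise coprime. For `c ∈ C`,
write `a ∏_{j ≠ i} hⱼ + b hᵢ = 1`; then `(a ∏_{j ≠ i} hⱼ) • c` lies in `C` and equals `c` in block
`i` and `0` elsewhere, so `C` contains `πᵢ(C)` placed in block `i`, hence the whole product of
its projections. For an MT code take `hᵢ = (x^{mᵢ} − λᵢ)/gᵢ`, which annihilates
`πᵢ(C) = ⟨gᵢ⟩ ⊆ F[x]/(x^{mᵢ} − λᵢ)`.
-/

open Function Polynomial

namespace Submodule

variable {R ι : Type*} [CommSemiring R] [Fintype ι] [DecidableEq ι] {M : ι → Type*}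
  [∀ i, AddCommMonoid (M i)] [∀ i, Module R (M i)]
  {C : Submodule R (Π i, M i)} {h : ι → R}

theorem single_mem_of_pairwise_isCoprime
    (hann : ∀ i, h i ∈ (C.map (LinearMap.proj i)).annihilator)
    (hcop : Pairwise (IsCoprime on h)) {c : Π i, M i} (hc : c ∈ C) (i : ι) :
    Pi.single i (c i) ∈ C := by
  have hkill : ∀ j, h j • c j = 0 := fun j => mem_annihilator.1 (hann j) (c j) ⟨c, hc, rfl⟩
  obtain ⟨a, b, hab⟩ : IsCoprime (∏ j ∈ Finset.univ.erase i, h j) (h i) :=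
    IsCoprime.prod_left fun j hj => hcop (Finset.ne_of_mem_erase hj)
  suffices (a * ∏ j ∈ Finset.univ.erase i, h j) • c = Pi.single i (c i) from
    this ▸ C.smul_mem _ hc
  ext j
  rcases eq_or_ne j i with rfl | hji
  · calc (a * ∏ k ∈ Finset.univ.erase j, h k) • c j
          = (a * ∏ k ∈ Finset.univ.erase j, h k + b * h j) • c j := by
            rw [add_smul, mul_smul b, hkill, smul_zero, add_zero]
      _ = Pi.single j (c j) j := by rw [hab, one_smul, Pi.single_eq_same]
  · obtain ⟨r, hr⟩ := Finset.dvd_prod_of_mem h (Finset.mem_erase.2 ⟨hji, Finset.mem_univ j⟩)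
    rw [Pi.smul_apply, hr, Pi.single_eq_of_ne hji, mul_comm (h j) r, ← mul_assoc, mul_smul, hkill,
      smul_zero]

theorem mem_iff_forall_mem_map_proj_of_pairwise_isCoprime
    (hann : ∀ i, h i ∈ (C.map (LinearMap.proj i)).annihilator)
    (hcop : Pairwise (IsCoprime on h)) {v : Π i, M i} :
    v ∈ C ↔ ∀ i, v i ∈ C.map (LinearMap.proj i) := by
  refine ⟨fun hv i => ⟨v, hv, rfl⟩, fun hv => ?_⟩
  rw [← Finset.univ_sum_single v]
  refine C.sum_mem fun i _ => ?_
  obtain ⟨c, hc, hci⟩ := hv i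
  rw [← hci]
  exact single_mem_of_pairwise_isCoprime hann hcop hc i

end Submodule

theorem EuclideanDomain.div_mem_annihilator_span_mk {R : Type*} [EuclideanDomain R] {f g : R}
    (hgf : g ∣ f) :
    f / g ∈ (Submodule.span R {Ideal.Quotient.mk (Ideal.span {f}) g}).annihilator := by
  rw [Submodule.mem_annihilator_span_singleton, Algebra.smul_def, Ideal.Quotient.algebraMap_eq,
    ← map_mul, Ideal.Quotient.eq_zero_iff_mem, Ideal.mem_span_singleton]
  rcases eq_or_ne g 0 with rfl | hg
  · simp
  · rw [mul_comm, EuclideanDomain.mul_div_cancel' hg hgf]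

theorem stmt0_general (F : Type*) [Field F]
    (ℓ : ℕ)
    -- the block polynomials x^{mᵢ} − λᵢ
    (f : Fin ℓ → Polynomial F)
    (Ccode : Submodule (Polynomial F) (Π i, Polynomial F ⧸ Ideal.span {f i}))
    -- gᵢ = monic gcd of f i and representatives of the πᵢ(gen j), encoded via:
    (g : Fin ℓ → Polynomial F)
    (hgdvd : ∀ i, g i ∣ f i)
    (hgspan : ∀ i, Submodule.map (LinearMap.proj i :
        (Π j, Polynomial F ⧸ Ideal.span {f j}) →ₗ[Polynomial F] Polynomial F ⧸ Ideal.span {f i})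
        Ccode
      = Submodule.span (Polynomial F) {Ideal.Quotient.mk (Ideal.span {f i}) (g i)})
    -- pairwise coprimality of (x^{mᵢ} − λᵢ)/gᵢ
    (hcop : ∀ i j, i ≠ j → IsCoprime (f i / g i) (f j / g j)) :
    ∀ v : Π i, Polynomial F ⧸ Ideal.span {f i},
      v ∈ Ccode ↔ ∀ i, v i ∈ Submodule.map (LinearMap.proj i :
        (Π j, Polynomial F ⧸ Ideal.span {f j}) →ₗ[Polynomial F] Polynomial F ⧸ Ideal.span {f i})
        Ccode := by
  intro v
  refine Submodule.mem_iff_forall_mem_map_proj_of_pairwise_isCoprime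
    (h := fun i => f i / g i) (fun i => ?_) hcop
  rw [hgspan i]
  exact EuclideanDomain.div_mem_annihilator_span_mk (hgdvd i)

theorem stmt0 (F : Type*) [Field F] [Fintype F]
    (ℓ : ℕ) (hℓ : 1 ≤ ℓ)
    (m : Fin ℓ → ℕ) (hm : ∀ i, 1 ≤ m i)
    (lam : Fin ℓ → F) (hlam : ∀ i, lam i ≠ 0)
    -- the block polynomials x^{mᵢ} − λᵢ
    (f : Fin ℓ → Polynomial F) (hf : ∀ i, f i = X ^ (m i) - C (lam i))
    -- the ρ generators of C inside V = ∏ᵢ F[x]/(x^{mᵢ} − λᵢ)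
    (ρ : ℕ) (gen : Fin ρ → Π i, Polynomial F ⧸ Ideal.span {f i})
    (Ccode : Submodule (Polynomial F) (Π i, Polynomial F ⧸ Ideal.span {f i}))
    (hC : Ccode = Submodule.span (Polynomial F) (Set.range gen))
    -- gᵢ = monic gcd of f i and representatives of the πᵢ(gen j), encoded via:
    (g : Fin ℓ → Polynomial F)
    (hgmonic : ∀ i, (g i).Monic)
    (hgdvd : ∀ i, g i ∣ f i)
    (hgspan : ∀ i, Submodule.map (LinearMap.proj i :
        (Π j, Polynomial F ⧸ Ideal.span {f j}) →ₗ[Polynomial F] Polynomial F ⧸ Ideal.span {f i})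
        Ccode
      = Submodule.span (Polynomial F) {Ideal.Quotient.mk (Ideal.span {f i}) (g i)})
    -- pairwise coprimality of (x^{mᵢ} − λᵢ)/gᵢ
    (hcop : ∀ i j, i ≠ j → IsCoprime (f i / g i) (f j / g j)) :
    ∀ v : Π i, Polynomial F ⧸ Ideal.span {f i},
      v ∈ Ccode ↔ ∀ i, v i ∈ Submodule.map (LinearMap.proj i :
        (Π j, Polynomial F ⧸ Ideal.span {f j}) →ₗ[Polynomial F] Polynomial F ⧸ Ideal.span {f i})
        Ccode :=
  stmt0_general F ℓ f Ccode g hgdvd hgspan hcop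
end

section
/- Let C be an F[x]-submodule of V = R_1 × ⋯ × R_ℓ generated by elements g_1, …, g_ρ ∈ V, and for each 1 ≤ i ≤ ℓ let g_i(x) be the monic gcd in F[x] of x^{m_i} − λ_i together with polynomial representatives of π_i(g_1), …, π_i(g_ρ). Suppose the polynomials (x^{m_1} − λ_1)/g_1(x), …, (x^{m_ℓ} − λ_ℓ)/g_ℓ(x) are pairwise coprime in F[x]. Then, identifying V with F^n blockwise via coefficients, for each i the i-th projection of the Euclidean dual equals the dual of the i-th projection, π_i(C^⊥) = (π_i(C))^⊥ (the dual of π_i(C) taken inside F^{m_i}), and C^⊥ = (π_1(C))^⊥ × ⋯ × (π_ℓ(C))^⊥; that is, a vector (a_1, …, a_ℓ) ∈ F^{m_1} × ⋯ × F^{m_ℓ} lies in C^⊥ if and only if for every i the block a_i is orthogonal to every element of π_i(C) under the standard dot product on F^{m_i}. -/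
/-!
STATEMENT 1 (Theorem `directprod`, dual part): under pairwise coprimality of the
(x^{mᵢ} − λᵢ)/gᵢ(x), one has πᵢ(C^⊥) = (πᵢ(C))^⊥ for each i, and C^⊥ is the product of
the (πᵢ(C))^⊥: a vector lies in C^⊥ iff each of its blocks is orthogonal to every
element of the corresponding projection πᵢ(C).

The blockwise identification of F^{mᵢ} with F[x]/(x^{mᵢ} − λᵢ) is realized by the map
`blk` sending a coefficient vector to the class of its polynomial; membership of a
coefficient vector `a : Π i, Fin (m i) → F` in C (resp. C^⊥) is expressed through it.
-/

open Polynomial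

theorem stmt1 (F : Type*) [Field F] [Fintype F]
    (ℓ : ℕ) (hℓ : 1 ≤ ℓ)
    (m : Fin ℓ → ℕ) (hm : ∀ i, 1 ≤ m i)
    (lam : Fin ℓ → F) (hlam : ∀ i, lam i ≠ 0)
    (f : Fin ℓ → Polynomial F) (hf : ∀ i, f i = X ^ (m i) - C (lam i))
    -- the blockwise coefficient identification
    (blk : ∀ i, (Fin (m i) → F) → Polynomial F ⧸ Ideal.span {f i})
    (hblk : ∀ i b, blk i b
      = Ideal.Quotient.mk (Ideal.span {f i}) (∑ k : Fin (m i), C (b k) * X ^ (k : ℕ)))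
    (ρ : ℕ) (gen : Fin ρ → Π i, Polynomial F ⧸ Ideal.span {f i})
    (Ccode : Submodule (Polynomial F) (Π i, Polynomial F ⧸ Ideal.span {f i}))
    (hC : Ccode = Submodule.span (Polynomial F) (Set.range gen))
    (g : Fin ℓ → Polynomial F)
    (hgmonic : ∀ i, (g i).Monic)
    (hgdvd : ∀ i, g i ∣ f i)
    (hgspan : ∀ i, Submodule.map (LinearMap.proj i :
        (Π j, Polynomial F ⧸ Ideal.span {f j}) →ₗ[Polynomial F] Polynomial F ⧸ Ideal.span {f i})
        Ccode
      = Submodule.span (Polynomial F) {Ideal.Quotient.mk (Ideal.span {f i}) (g i)})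
    (hcop : ∀ i j, i ≠ j → IsCoprime (f i / g i) (f j / g j)) :
    -- C^⊥ = ∏ᵢ (πᵢ(C))^⊥ : a vector lies in C^⊥ iff every block is orthogonal to πᵢ(C)
    (∀ a : Π i, Fin (m i) → F,
      (∀ b : Π i, Fin (m i) → F, (fun i => blk i (b i)) ∈ Ccode →
          ∑ i, ∑ k, a i k * b i k = 0)
        ↔ ∀ i, ∀ b : Fin (m i) → F,
            blk i b ∈ Submodule.map (LinearMap.proj i :
              (Π j, Polynomial F ⧸ Ideal.span {f j}) →ₗ[Polynomial F]
                Polynomial F ⧸ Ideal.span {f i}) Ccode →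
            ∑ k, a i k * b k = 0) ∧
    -- πᵢ(C^⊥) = (πᵢ(C))^⊥ for each i
    (∀ i, {c : Fin (m i) → F | ∃ a : Π i, Fin (m i) → F,
        (∀ b : Π i, Fin (m i) → F, (fun i => blk i (b i)) ∈ Ccode →
          ∑ i, ∑ k, a i k * b i k = 0) ∧ a i = c}
      = {c : Fin (m i) → F | ∀ b : Fin (m i) → F,
          blk i b ∈ Submodule.map (LinearMap.proj i :
            (Π j, Polynomial F ⧸ Ideal.span {f j}) →ₗ[Polynomial F]
              Polynomial F ⧸ Ideal.span {f i}) Ccode →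
          ∑ k, c k * b k = 0}) := by
  classical
  -- basic facts
  have hg0 : ∀ i, g i ≠ 0 := fun i => (hgmonic i).ne_zero
  have hfg : ∀ i, (f i / g i) * g i = f i := by
    intro i
    rw [mul_comm]
    exact EuclideanDomain.mul_div_cancel' (hg0 i) (hgdvd i)
  -- abbreviation
  set π : ∀ i, (Π j, Polynomial F ⧸ Ideal.span {f j}) →ₗ[Polynomial F]
      Polynomial F ⧸ Ideal.span {f i} := fun i => LinearMap.proj i with hπ
  -- core lemma: elements of πᵢ(C) lift to "single" elements of C
  have key : ∀ i (c : Polynomial F ⧸ Ideal.span {f i}),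
      c ∈ Submodule.map (π i) Ccode → Pi.single i c ∈ Ccode := by
    intro i c hc
    rw [hgspan i] at hc
    obtain ⟨p, hp⟩ := Submodule.mem_span_singleton.mp hc
    -- get a lift of mk (g i)
    have hgi : Ideal.Quotient.mk (Ideal.span {f i}) (g i) ∈ Submodule.map (π i) Ccode := by
      rw [hgspan i]; exact Submodule.mem_span_singleton_self _
    obtain ⟨y, hy, hyi⟩ := hgi
    -- the big product of cofactors
    set H : Polynomial F := ∏ j ∈ Finset.univ.erase i, (f j / g j) with hH
    have hcopH : IsCoprime H (f i / g i) :=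
      IsCoprime.prod_left fun j hj => hcop j i (Finset.ne_of_mem_erase hj)
    obtain ⟨u, v, huv⟩ := hcopH
    have hmem : (p * (u * H)) • y ∈ Ccode := Ccode.smul_mem _ hy
    have heq : Pi.single i c = (p * (u * H)) • y := by
      funext j
      by_cases hji : j = i
      · subst hji
        have hyi' : y j = Ideal.Quotient.mk (Ideal.span {f j}) (g j) := hyi
        rw [Pi.single_eq_same, Pi.smul_apply, hyi', ← hp]
        show p • Ideal.Quotient.mk (Ideal.span {f j}) (g j)
            = Ideal.Quotient.mk (Ideal.span {f j}) (p * (u * H) * g j)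
        show Ideal.Quotient.mk (Ideal.span {f j}) (p * g j)
            = Ideal.Quotient.mk (Ideal.span {f j}) (p * (u * H) * g j)
        rw [Ideal.Quotient.eq]
        have hd : p * g j - p * (u * H) * g j = (p * v) * f j := by
          linear_combination (-(p * g j)) * huv + (p * v) * (hfg j)
        rw [hd]
        exact Ideal.mul_mem_left _ _ (Ideal.subset_span rfl)
      · rw [Pi.single_eq_of_ne hji, Pi.smul_apply]
        -- y j ∈ π_j(C) = span {mk (g j)}
        have hyj : y j ∈ Submodule.map (π j) Ccode := ⟨y, hy, rfl⟩
        rw [hgspan j] at hyj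
        obtain ⟨q, hq⟩ := Submodule.mem_span_singleton.mp hyj
        rw [← hq]
        have : (p * (u * H)) • q • Ideal.Quotient.mk (Ideal.span {f j}) (g j)
            = Ideal.Quotient.mk (Ideal.span {f j}) (p * (u * H) * (q * g j)) := rfl
        rw [this]
        symm
        rw [Ideal.Quotient.eq_zero_iff_mem]
        have hHj : (f j / g j) ∣ H := Finset.dvd_prod_of_mem _
          (Finset.mem_erase.mpr ⟨fun h => hji (h ▸ rfl), Finset.mem_univ j⟩)
        obtain ⟨r, hr⟩ := hHj
        have : p * (u * H) * (q * g j) = (p * u * r * q) * f j := by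
          linear_combination (p * u * q * g j) * hr + (p * u * r * q) * (hfg j)
        rw [this]
        exact Ideal.mul_mem_left _ _ (Ideal.subset_span rfl)
    rw [heq]; exact hmem
  -- blk sends 0 to 0
  have hblk0 : ∀ j, blk j 0 = 0 := by
    intro j
    rw [hblk]
    simp
  -- part 1
  have part1 : ∀ a : Π i, Fin (m i) → F,
      (∀ b : Π i, Fin (m i) → F, (fun i => blk i (b i)) ∈ Ccode →
          ∑ i, ∑ k, a i k * b i k = 0)
        ↔ ∀ i, ∀ b : Fin (m i) → F,
            blk i b ∈ Submodule.map (π i) Ccode →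
            ∑ k, a i k * b k = 0 := by
    intro a
    constructor
    · intro h i b hb
      have hsingle : Pi.single i (blk i b) ∈ Ccode := key i _ hb
      set b' : Π j, Fin (m j) → F := Function.update (fun j => 0) i b with hb'
      have hblkb' : (fun j => blk j (b' j)) = Pi.single i (blk i b) := by
        funext j
        by_cases hji : j = i
        · subst hji; simp [hb', Function.update_self]
        · rw [Pi.single_eq_of_ne hji]
          simp [hb', Function.update_of_ne hji, hblk0]
      have h0 := h b' (by rw [hblkb']; exact hsingle)
      rw [Finset.sum_eq_single i (fun j _ hji => by
        simp [hb', Function.update_of_ne hji]) (by simp)] at h0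
      simpa [hb', Function.update_self] using h0
    · intro h b hb
      have : ∀ i : Fin ℓ, ∑ k, a i k * b i k = 0 := by
        intro i
        exact h i (b i) ⟨fun j => blk j (b j), hb, rfl⟩
      simp [this]
  refine ⟨part1, ?_⟩
  intro i
  ext c
  simp only [Set.mem_setOf_eq]
  constructor
  · rintro ⟨a, ha, rfl⟩ b hb
    exact (part1 a).mp ha i b hb
  · intro h
    refine ⟨Function.update (fun j => 0) i c, ?_, by simp⟩
    intro b hb
    rw [Finset.sum_eq_single i (fun j _ hji => by
      simp [Function.update_of_ne hji]) (by simp)]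
    rw [Function.update_self]
    exact h (b i) ⟨fun j => blk j (b j), hb, rfl⟩
end

section
/- Let C be an F[x]-submodule of V = R_1 × ⋯ × R_ℓ generated by elements g_1, …, g_ρ ∈ V, and for each 1 ≤ i ≤ ℓ let g_i(x) be the monic gcd in F[x] of x^{m_i} − λ_i together with polynomial representatives of π_i(g_1), …, π_i(g_ρ). If the polynomials (x^{m_1} − λ_1)/g_1(x), …, (x^{m_ℓ} − λ_ℓ)/g_ℓ(x) are pairwise coprime in F[x], and if moreover λ_i ≠ λ_i^{−1} (equivalently λ_i² ≠ 1) for every 1 ≤ i ≤ ℓ, then C is LCD, i.e., C ∩ C^⊥ = {0}. -/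
/-!
Write hᵢ = fᵢ / gᵢ. Each hᵢ annihilates πᵢ(C), so pairwise coprimality of the hᵢ lets one cut out
of any codeword its i-th block alone (Chinese remainder): C contains the vector with gᵢ in block i
and 0 elsewhere, and C ∩ C^⊥ = {0} reduces to one λ-constacyclic code (g) ⊆ F[x]/(xᵐ − λ).

There, if v is orthogonal to the code then xᵐ − λ ∣ v*·g, where v* is the reciprocal of v: the dot
product of v with xᵗg mod (xᵐ − λ) is a coefficient of v*·g mod (xᵐ − λ). If moreover v = g·u,
then h ∣ g*·u*, and h is coprime to g* because h ∣ xᵐ − λ, g* ∣ xᵐ − λ⁻¹ and λ ≠ λ⁻¹. Hence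
h ∣ u*, whose degree is smaller than that of h, so u = 0.
-/

open Polynomial

section
open Finset
variable {R : Type*}

lemma sum_C_mul_X_pow_eq_ofFn [Semiring R] [DecidableEq R] {n : ℕ} (v : Fin n → R) :
    ∑ k : Fin n, C (v k) * X ^ (k : ℕ) = ofFn n v := by
  simp only [ofFn_eq_sum_monomial, C_mul_X_pow_eq_monomial]

lemma coeff_reflect_mul_eq_sum [Semiring R] (P Q : R[X]) (N : ℕ) :
    (reflect N P * Q).coeff N = ∑ k ∈ range (N + 1), P.coeff k * Q.coeff k := by
  rw [coeff_mul,
    Nat.sum_antidiagonal_eq_sum_range_succ (fun i j => (reflect N P).coeff i * Q.coeff j),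
    ← sum_range_reflect]
  refine sum_congr rfl fun k hk => ?_
  have hk : k ≤ N := Nat.lt_succ_iff.1 (mem_range.1 hk)
  rw [coeff_reflect, revAt_le (by omega), show N + 1 - 1 - k = N - k by omega,
    show N - (N - k) = k by omega]

lemma coeff_modByMonic_X_pow_sub_C [Ring R] [Nontrivial R] {m k : ℕ} (c : R) {A : R[X]}
    (hk : k < m) (hA : A.natDegree < m + k) :
    (A %ₘ (X ^ m - C c)).coeff k = A.coeff k := by
  have hmonic : (X ^ m - C c).Monic := monic_X_pow_sub_C c (by omega)
  rcases lt_or_ge A.natDegree m with hAm | hAm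
  · rw [(modByMonic_eq_self_iff hmonic).2]
    rw [degree_X_pow_sub_C (by omega)]
    exact degree_le_natDegree.trans_lt (by exact_mod_cast hAm)
  · have hQ : (A /ₘ (X ^ m - C c)).coeff k = 0 := by
      apply coeff_eq_zero_of_natDegree_lt
      rw [natDegree_divByMonic _ hmonic, natDegree_X_pow_sub_C]
      omega
    rw [modByMonic_eq_sub_mul_div, coeff_sub, sub_mul, coeff_sub, coeff_X_pow_mul',
      if_neg (by omega), coeff_C_mul, hQ]
    simp

lemma X_pow_sub_C_dvd_reflect_mul [CommRing R] [Nontrivial R] {n : ℕ} {c : R} {P g : R[X]}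
    (hg : g ∣ X ^ (n + 1) - C c) (hP : P.natDegree ≤ n)
    (horth : ∀ Q : R[X], Q.natDegree ≤ n → g ∣ Q →
      ∑ k ∈ range (n + 1), P.coeff k * Q.coeff k = 0) :
    X ^ (n + 1) - C c ∣ reflect n P * g := by
  set f : R[X] := X ^ (n + 1) - C c
  have hmonic : f.Monic := monic_X_pow_sub_C c n.succ_ne_zero
  have hfdeg : f.natDegree = n + 1 := natDegree_X_pow_sub_C
  have hmod : ∀ A, (A %ₘ f).natDegree ≤ n := fun A => by
    have := natDegree_modByMonic_lt A hmonic fun h => by simp [h] at hfdeg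
    omega
  have hPr : (reflect n P).natDegree ≤ n := natDegree_reflect_le.trans (max_le le_rfl hP)
  set S := (reflect n P * g) %ₘ f
  rw [← modByMonic_eq_zero_iff_dvd hmonic]
  refine ext fun j => ?_
  rcases le_or_gt j n with hj | hj
  · obtain ⟨t, ht, rfl⟩ : ∃ t ≤ n, j = n - t := ⟨n - j, by omega, by omega⟩
    set Rt := (X ^ t * g) %ₘ f
    have hcongr : (X ^ t * S) %ₘ f = (reflect n P * Rt) %ₘ f := by
      refine modByMonic_eq_of_dvd_sub hmonic ?_
      have h1 := dvd_modByMonic_sub (reflect n P * g) f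
      have h2 := dvd_modByMonic_sub (X ^ t * g) f
      have : X ^ t * S - reflect n P * Rt
          = X ^ t * (S - reflect n P * g) - reflect n P * (Rt - X ^ t * g) := by ring
      rw [this]
      exact dvd_sub (h1.mul_left _) (h2.mul_left _)
    calc S.coeff (n - t) = (X ^ t * S).coeff n := by rw [coeff_X_pow_mul', if_pos ht]
      _ = ((X ^ t * S) %ₘ f).coeff n := by
        rw [coeff_modByMonic_X_pow_sub_C c n.lt_succ_self]
        exact natDegree_mul_le.trans_lt (by grw [natDegree_X_pow_le, hmod]; omega)
      _ = ((reflect n P * Rt) %ₘ f).coeff n := by rw [hcongr]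
      _ = (reflect n P * Rt).coeff n := by
        rw [coeff_modByMonic_X_pow_sub_C c n.lt_succ_self]
        exact natDegree_mul_le.trans_lt (by grw [hPr, hmod]; omega)
      _ = 0 := by
        rw [coeff_reflect_mul_eq_sum]
        exact horth Rt (hmod _) ((dvd_sub_left (dvd_mul_left g _)).1
          (hg.trans (dvd_modByMonic_sub _ f)))
  · exact coeff_eq_zero_of_natDegree_lt ((hmod _).trans_lt hj)

end

section
variable {F : Type*} [Field F]

lemma isCoprime_X_pow_sub_C_X_pow_sub_C {a b : F} (hab : a ≠ b) (m : ℕ) :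
    IsCoprime (X ^ m - C a) (X ^ m - C b) := by
  have h : C (a - b)⁻¹ * (C a - C b) = 1 := by
    rw [← C_sub, ← C_mul, inv_mul_cancel₀ (sub_ne_zero.2 hab), C_1]
  exact ⟨-C (a - b)⁻¹, C (a - b)⁻¹, by linear_combination h⟩

lemma reverse_X_pow_sub_C (m : ℕ) (c : F) : (X ^ m - C c).reverse = 1 - C c * X ^ m := by
  rw [reverse, natDegree_X_pow_sub_C, reflect_sub, reflect_monomial, reflect_C, revAt_le le_rfl,
    Nat.sub_self, pow_zero]

lemma reverse_dvd_X_pow_sub_C_inv {m : ℕ} {c : F} (hc : c ≠ 0) {g : F[X]}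
    (hg : g ∣ X ^ m - C c) : g.reverse ∣ X ^ m - C c⁻¹ := by
  obtain ⟨h, hgh⟩ := hg
  have hrev : 1 - C c * X ^ m = g.reverse * h.reverse := by
    rw [← reverse_X_pow_sub_C, hgh, reverse_mul_of_domain]
  have hcc : C c⁻¹ * C c = 1 := by rw [← C_mul, inv_mul_cancel₀ hc, C_1]
  exact ⟨-C c⁻¹ * h.reverse, by linear_combination (-C c⁻¹) * hrev - X ^ m * hcc⟩

lemma eq_zero_of_dvd_of_X_pow_sub_C_dvd_reflect_mul {n : ℕ} {c : F} (hc : c ≠ 0)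
    (hc2 : c ^ 2 ≠ 1) {g P : F[X]} (hg : g ∣ X ^ (n + 1) - C c) (hP : P.natDegree ≤ n) (hgP : g ∣ P)
    (hdvd : X ^ (n + 1) - C c ∣ reflect n P * g) : P = 0 := by
  obtain ⟨h, hgh⟩ := id hg
  obtain ⟨u, rfl⟩ := hgP
  by_contra hgu
  have hg0 : g ≠ 0 := left_ne_zero_of_mul hgu
  have hu0 : u ≠ 0 := right_ne_zero_of_mul hgu
  have hdeg_gu : g.natDegree + u.natDegree ≤ n := natDegree_mul hg0 hu0 ▸ hP
  have hdeg_gh : g.natDegree + h.natDegree = n + 1 := by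
    rw [← natDegree_mul hg0 (right_ne_zero_of_mul (hgh ▸ X_pow_sub_C_ne_zero n.succ_pos c)), ← hgh,
      natDegree_X_pow_sub_C]
  have hrefl : reflect n (g * u) = g.reverse * reflect (n - g.natDegree) u := by
    rw [reverse, ← reflect_mul _ _ le_rfl (by omega : u.natDegree ≤ n - g.natDegree)]
    congr 1; omega
  have hcop : IsCoprime h g.reverse := by
    have hcc : c ≠ c⁻¹ := fun heq => hc2 (by rw [sq]; nth_rw 2 [heq]; exact mul_inv_cancel₀ hc)
    exact ((isCoprime_X_pow_sub_C_X_pow_sub_C hcc _).of_isCoprime_of_dvd_left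
      (Dvd.intro_left g hgh.symm)).of_isCoprime_of_dvd_right (reverse_dvd_X_pow_sub_C_inv hc hg)
  have hdvd_u : h ∣ reflect (n - g.natDegree) u := by
    refine hcop.dvd_of_dvd_mul_left ((mul_dvd_mul_iff_left hg0).1 ?_)
    rw [← hrefl, ← hgh, mul_comm g]
    exact hdvd
  have hu' : reflect (n - g.natDegree) u ≠ 0 := mt reflect_eq_zero_iff.1 hu0
  have hdeg_h := natDegree_le_of_dvd hdvd_u hu'
  have hdeg_u' := natDegree_reflect_le (p := u) (N := n - g.natDegree)
  omega

theorem eq_zero_of_dvd_ofFn_of_forall_dotProduct_eq_zero [DecidableEq F] {m : ℕ} {c : F}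
    (hc : c ≠ 0) (hc2 : c ^ 2 ≠ 1) {g : F[X]} (hg : g ∣ X ^ m - C c) {v : Fin m → F}
    (hv : g ∣ ofFn m v) (horth : ∀ w : Fin m → F, g ∣ ofFn m w → v ⬝ᵥ w = 0) :
    v = 0 := by
  rcases m with _ | n
  · exact Subsingleton.elim _ _
  have hP : (ofFn (n + 1) v).natDegree ≤ n := Nat.lt_succ_iff.1 (ofFn_natDegree_lt n.succ_pos v)
  have hzero := eq_zero_of_dvd_of_X_pow_sub_C_dvd_reflect_mul hc hc2 hg hP hv
      (X_pow_sub_C_dvd_reflect_mul hg hP fun Q hQ hgQ => ?_)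
  · exact injective_ofFn (n + 1) (hzero.trans (ofFn_zero (n + 1)).symm)
  have hQ' : ofFn (n + 1) (toFn (n + 1) Q) = Q := ofFn_comp_toFn_eq_id_of_natDegree_lt (by omega)
  rw [← Fin.sum_univ_eq_sum_range (fun k => (ofFn (n + 1) v).coeff k * Q.coeff k),
    ← horth (toFn (n + 1) Q) (hQ'.symm ▸ hgQ), dotProduct]
  refine Finset.sum_congr rfl fun k _ => ?_
  rw [ofFn_coeff_eq_val_of_lt v k.isLt]
  rfl

end

lemma EuclideanDomain.mul_div_cancel_of_dvd {R : Type*} [EuclideanDomain R] {a b : R}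
    (hba : b ∣ a) : b * (a / b) = a := by
  rcases eq_or_ne b 0 with rfl | hb
  · rw [zero_mul, eq_comm, ← zero_dvd_iff]
    exact hba
  · exact EuclideanDomain.mul_div_cancel' hb hba

section
open Finset
variable {R : Type*} [CommRing R]

lemma Submodule.single_mem_of_pairwise_isCoprime_s2 {ι : Type*} [Fintype ι] [DecidableEq ι]
    {M : ι → Type*} [∀ i, AddCommGroup (M i)] [∀ i, Module R (M i)] {C : Submodule R (Π i, M i)}
    {h : ι → R} (hcop : Pairwise fun i j => IsCoprime (h i) (h j))
    (hann : ∀ c ∈ C, ∀ i, h i • c i = 0)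
    {c : Π i, M i} (hc : c ∈ C) (i : ι) : Pi.single i (c i) ∈ C := by
  obtain ⟨u, w, huw⟩ : IsCoprime (h i) (∏ j ∈ univ.erase i, h j) :=
    IsCoprime.prod_right fun j hj => hcop (ne_of_mem_erase hj).symm
  convert C.smul_mem (w * ∏ j ∈ univ.erase i, h j) hc using 1
  ext j
  rcases eq_or_ne j i with rfl | hji
  · rw [Pi.single_eq_same, Pi.smul_apply, eq_sub_of_add_eq' huw, sub_smul, one_smul, mul_smul,
      hann c hc j, smul_zero, sub_zero]
  · rw [Pi.single_eq_of_ne hji, Pi.smul_apply,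
      ← mul_prod_erase _ _ (mem_erase.2 ⟨hji, mem_univ j⟩), mul_left_comm, mul_smul, smul_comm,
      hann c hc j, smul_zero]

lemma smul_eq_zero_of_mem_span_singleton_mk {f g h : R} (hgh : g * h = f)
    {x : R ⧸ Ideal.span {f}} (hx : x ∈ R ∙ Ideal.Quotient.mk _ g) : h • x = 0 := by
  obtain ⟨q, rfl⟩ := Submodule.mem_span_singleton.1 hx
  rw [smul_smul, Algebra.smul_def, Ideal.Quotient.algebraMap_eq, ← map_mul,
    Ideal.Quotient.eq_zero_iff_mem, Ideal.mem_span_singleton, ← hgh]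
  exact ⟨q, by ring⟩

lemma mk_mem_span_singleton_mk_iff {f g p : R} (hgf : g ∣ f) :
    Ideal.Quotient.mk (Ideal.span {f}) p ∈ R ∙ Ideal.Quotient.mk _ g ↔ g ∣ p := by
  rw [Submodule.mem_span_singleton]
  simp only [Algebra.smul_def, Ideal.Quotient.algebraMap_eq, ← map_mul, Ideal.Quotient.eq,
    Ideal.mem_span_singleton]
  constructor
  · rintro ⟨q, hq⟩
    exact (dvd_sub_right (dvd_mul_left g q)).1 (hgf.trans hq)
  · rintro ⟨q, rfl⟩
    exact ⟨q, by rw [mul_comm, sub_self]; exact dvd_zero f⟩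

end

theorem stmt2_general (F : Type*) [Field F]
    (ℓ : ℕ)
    (m : Fin ℓ → ℕ)
    (lam : Fin ℓ → F) (hlam : ∀ i, lam i ≠ 0)
    (hlam2 : ∀ i, lam i ^ 2 ≠ 1)
    (f : Fin ℓ → Polynomial F) (hf : ∀ i, f i = X ^ (m i) - C (lam i))
    (blk : ∀ i, (Fin (m i) → F) → Polynomial F ⧸ Ideal.span {f i})
    (hblk : ∀ i b, blk i b
      = Ideal.Quotient.mk (Ideal.span {f i}) (∑ k : Fin (m i), C (b k) * X ^ (k : ℕ)))
    (Ccode : Submodule (Polynomial F) (Π i, Polynomial F ⧸ Ideal.span {f i}))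
    (g : Fin ℓ → Polynomial F)
    (hgdvd : ∀ i, g i ∣ f i)
    (hgspan : ∀ i, Submodule.map (LinearMap.proj i :
        (Π j, Polynomial F ⧸ Ideal.span {f j}) →ₗ[Polynomial F] Polynomial F ⧸ Ideal.span {f i})
        Ccode
      = Submodule.span (Polynomial F) {Ideal.Quotient.mk (Ideal.span {f i}) (g i)})
    (hcop : ∀ i j, i ≠ j → IsCoprime (f i / g i) (f j / g j)) :
    -- C is LCD: C ∩ C^⊥ = {0}
    ∀ a : Π i, Fin (m i) → F,
      (fun i => blk i (a i)) ∈ Ccode →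
      (∀ b : Π i, Fin (m i) → F, (fun i => blk i (b i)) ∈ Ccode →
        ∑ i, ∑ k, a i k * b i k = 0) →
      a = 0 := by
  classical
  intro a ha horth
  have hblk_ofFn : ∀ i b, blk i b = Ideal.Quotient.mk _ (ofFn (m i) b) := fun i b => by
    rw [hblk, sum_C_mul_X_pow_eq_ofFn]
  have hproj : ∀ c ∈ Ccode, ∀ i, c i ∈ F[X] ∙ Ideal.Quotient.mk _ (g i) := fun c hc i =>
    hgspan i ▸ Submodule.mem_map_of_mem hc
  have hsingle : ∀ c ∈ Ccode, ∀ i, Pi.single i (c i) ∈ Ccode := fun c hc =>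
    Submodule.single_mem_of_pairwise_isCoprime_s2 (fun i j hij => hcop i j hij)
      (fun c hc i => smul_eq_zero_of_mem_span_singleton_mk
        (EuclideanDomain.mul_div_cancel_of_dvd (hgdvd i)) (hproj c hc i)) hc
  funext i
  refine eq_zero_of_dvd_ofFn_of_forall_dotProduct_eq_zero (hlam i) (hlam2 i)
    (hf i ▸ hgdvd i) ?_ fun w hw => ?_
  · exact (mk_mem_span_singleton_mk_iff (hgdvd i)).1 (hblk_ofFn i (a i) ▸ hproj _ ha i)
  · have hw_proj : blk i w ∈ Ccode.map (LinearMap.proj i) := by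
      rw [hgspan i, hblk_ofFn]
      exact (mk_mem_span_singleton_mk_iff (hgdvd i)).2 hw
    obtain ⟨c, hc, hci⟩ := Submodule.mem_map.1 hw_proj
    have hw_mem : (fun j => blk j ((Pi.single i w : Π j, Fin (m j) → F) j)) ∈ Ccode := by
      convert hsingle c hc i using 1
      rw [show c i = blk i w from hci]
      exact funext (Pi.apply_single blk (fun j => by rw [hblk_ofFn, map_zero, map_zero]) i w)
    have hsum := horth _ hw_mem
    rwa [Finset.sum_eq_single i (fun j _ hji => by simp [Pi.single_eq_of_ne hji]) (by simp),
      Pi.single_eq_same] at hsum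

theorem stmt2 (F : Type*) [Field F] [Fintype F]
    (ℓ : ℕ) (hℓ : 1 ≤ ℓ)
    (m : Fin ℓ → ℕ) (hm : ∀ i, 1 ≤ m i)
    (lam : Fin ℓ → F) (hlam : ∀ i, lam i ≠ 0)
    (hlam2 : ∀ i, lam i ^ 2 ≠ 1)
    (f : Fin ℓ → Polynomial F) (hf : ∀ i, f i = X ^ (m i) - C (lam i))
    (blk : ∀ i, (Fin (m i) → F) → Polynomial F ⧸ Ideal.span {f i})
    (hblk : ∀ i b, blk i b
      = Ideal.Quotient.mk (Ideal.span {f i}) (∑ k : Fin (m i), C (b k) * X ^ (k : ℕ)))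
    (ρ : ℕ) (gen : Fin ρ → Π i, Polynomial F ⧸ Ideal.span {f i})
    (Ccode : Submodule (Polynomial F) (Π i, Polynomial F ⧸ Ideal.span {f i}))
    (hC : Ccode = Submodule.span (Polynomial F) (Set.range gen))
    (g : Fin ℓ → Polynomial F)
    (hgmonic : ∀ i, (g i).Monic)
    (hgdvd : ∀ i, g i ∣ f i)
    (hgspan : ∀ i, Submodule.map (LinearMap.proj i :
        (Π j, Polynomial F ⧸ Ideal.span {f j}) →ₗ[Polynomial F] Polynomial F ⧸ Ideal.span {f i})
        Ccode
      = Submodule.span (Polynomial F) {Ideal.Quotient.mk (Ideal.span {f i}) (g i)})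
    (hcop : ∀ i j, i ≠ j → IsCoprime (f i / g i) (f j / g j)) :
    -- C is LCD: C ∩ C^⊥ = {0}
    ∀ a : Π i, Fin (m i) → F,
      (fun i => blk i (a i)) ∈ Ccode →
      (∀ b : Π i, Fin (m i) → F, (fun i => blk i (b i)) ∈ Ccode →
        ∑ i, ∑ k, a i k * b i k = 0) →
      a = 0 :=
  stmt2_general F ℓ m lam hlam hlam2 f hf blk hblk Ccode g hgdvd hgspan hcop
end

section
/- Let C be an F[x]-submodule of V = R_1 × ⋯ × R_ℓ generated by elements g_1, …, g_ρ ∈ V. Choose polynomial representatives and form the (ρ + ℓ) × ℓ matrix G over F[x] whose first ρ rows are the representative tuples of g_1, …, g_ρ and whose last ℓ rows form the diagonal matrix diag(x^{m_1} − λ_1, …, x^{m_ℓ} − λ_ℓ). Let 𝔡_ℓ(G) be the ℓ-th determinantal divisor of G, i.e., the monic gcd in F[x] of the determinants of all ℓ × ℓ submatrices of G obtained by selecting ℓ of its rows. Then the dimension of C as an F-vector space equals n − deg(𝔡_ℓ(G)). -/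
/-!
The row module `M ⊆ F[x]^ℓ` of `G` contains the rows `f_i e_i`, which span the kernel of the
projection `F[x]^ℓ → V`, and it maps onto `C`; hence `V ⧸ C ≅ F[x]^ℓ ⧸ M`. The diagonal block
is a nonzero maximal minor, so `M` has full rank and a square basis matrix `Q`. The rows of `G`
and of `Q` are combinations of one another, so `det Q` divides every maximal minor of `G` and,
expanding `det Q` multilinearly in its rows (the easy half of Cauchy–Binet), every common divisor
of these minors divides `det Q`: thus `det Q` is associated to `𝔡_ℓ(G)`. Finally the Smith normal
form gives `F[x]^ℓ ⧸ M ≅ ⊕ F[x] ⧸ (a_i)` with `∏ a_i` associated to `det Q`, so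
`dim_F (V ⧸ C) = ∑ deg a_i = deg 𝔡_ℓ(G)`.
-/

open Polynomial Module Submodule

namespace Matrix

variable {R K ι : Type*}

theorem exists_eq_mul_of_rows_mem_span [CommSemiring R] {m : Type*} [Fintype K]
    {A : Matrix m ι R} {G : Matrix K ι R} (h : ∀ i, A i ∈ span R (Set.range G)) :
    ∃ X : Matrix m K R, A = X * G := by
  choose c hc using fun i => (mem_span_range_iff_exists_fun R).1 (h i)
  refine ⟨of c, ext fun i j => ?_⟩
  simp [← hc, mul_apply, Finset.sum_apply]

section CommRing

variable [CommRing R] [Fintype ι] [DecidableEq ι]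

theorem det_dvd_det_submatrix_of_rows_mem_span {P : Matrix ι ι R} {G : Matrix K ι R}
    (h : ∀ r, G r ∈ span R (Set.range P)) (s : ι → K) : P.det ∣ (G.submatrix s id).det := by
  obtain ⟨X, hX⟩ := exists_eq_mul_of_rows_mem_span (A := G.submatrix s id) fun i => h (s i)
  rw [hX, det_mul]
  exact dvd_mul_left _ _

theorem dvd_det_of_rows_mem_span [Fintype K] {G : Matrix K ι R} {Q : Matrix ι ι R}
    (h : ∀ i, Q i ∈ span R (Set.range G)) {e : R}
    (he : ∀ s : ι → K, e ∣ (G.submatrix s id).det) : e ∣ Q.det := by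
  obtain ⟨X, rfl⟩ := exists_eq_mul_of_rows_mem_span h
  have hrows : X * G = of fun i => ∑ r, X i r • G r := by
    ext i j; simp [mul_apply]
  rw [hrows]
  change e ∣ detRowAlternating.toMultilinearMap (fun i => ∑ r, X i r • G r)
  rw [MultilinearMap.map_sum]
  refine Finset.dvd_sum fun s _ => ?_
  rw [MultilinearMap.map_smul_univ]
  exact (he s).mul_left _

theorem associated_det_of_span_rows_eq [IsDomain R] {P Q : Matrix ι ι R}
    (h : span R (Set.range P) = span R (Set.range Q)) :
    Associated P.det Q.det := by
  refine associated_of_dvd_dvd ?_ ?_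
  · simpa using det_dvd_det_submatrix_of_rows_mem_span (G := Q)
      (fun i => h ▸ subset_span ⟨i, rfl⟩) id
  · simpa using det_dvd_det_submatrix_of_rows_mem_span (G := P)
      (fun i => h ▸ subset_span ⟨i, rfl⟩) id

theorem finrank_span_rows_of_det_submatrix_ne_zero [IsDomain R] [Finite K]
    {G : Matrix K ι R} {s₀ : ι → K} (hs₀ : (G.submatrix s₀ id).det ≠ 0) :
    finrank R (span R (Set.range G)) = Fintype.card ι := by
  have hli : LinearIndependent R (G.submatrix s₀ id) := by
    refine Fintype.linearIndependent_iff.2 fun c hc => ?_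
    by_contra hne
    refine hs₀ (exists_vecMul_eq_zero_iff.1 ⟨c, fun h => hne (congrFun h), ?_⟩)
    rw [← hc]; ext j; simp [vecMul, dotProduct, Finset.sum_apply]
  refine le_antisymm ?_ ?_
  · exact (finrank_le _).trans (finrank_fintype_fun_eq_card R).le
  · have := Module.Finite.span_of_finite R (Set.finite_range G)
    rw [← finrank_span_eq_card hli]
    exact finrank_mono (span_mono (Set.range_comp_subset_range s₀ G))

end CommRing

end Matrix

noncomputable def Submodule.quotEquivQuotMapOfKerLE {R M M₂ : Type*} [Ring R] [AddCommGroup M]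
    [AddCommGroup M₂] [Module R M] [Module R M₂] (f : M →ₗ[R] M₂)
    (hf : Function.Surjective f) (p : Submodule R M) (hp : LinearMap.ker f ≤ p) :
    (M ⧸ p) ≃ₗ[R] M₂ ⧸ p.map f :=
  (quotEquivOfEq p _ (by rw [LinearMap.ker_comp, ker_mkQ, comap_map_eq, sup_eq_left.2 hp])).trans
    (LinearMap.quotKerEquivOfSurjective ((p.map f).mkQ ∘ₗ f) ((mkQ_surjective _).comp hf))

theorem Module.Basis.span_range_coe {ι R M : Type*} [Semiring R] [AddCommMonoid M] [Module R M]
    {N : Submodule R M} (B : Basis ι R N) :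
    span R (Set.range fun i => (B i : M)) = N := by
  rw [show (Set.range fun i => (B i : M)) = N.subtype '' Set.range B from Set.range_comp _ _,
    span_image, B.span_eq, map_subtype_top]

section PolynomialLattice

variable {F : Type*} [Field F] {ι : Type*} [Fintype ι] [DecidableEq ι]

theorem finrank_quotient_eq_natDegree_det {N : Submodule F[X] (ι → F[X])}
    (bN : Basis ι F[X] N) :
    finrank F ((ι → F[X]) ⧸ N) = (Matrix.of fun i => (bN i : ι → F[X])).det.natDegree := by
  have hN : finrank F[X] N = finrank F[X] (ι → F[X]) := by
    rw [finrank_eq_card_basis bN, finrank_fintype_fun_eq_card]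
  set b := Pi.basisFun F[X] ι
  set a := smithNormalFormCoeffs b hN
  have ha : ∀ i, a i ≠ 0 := smithNormalFormCoeffs_ne_zero b hN
  set bN' := smithNormalFormBotBasis b hN
  have hdet : (Matrix.of fun i => (bN' i : ι → F[X])).det
      = (∏ i, a i) * b.det (smithNormalFormTopBasis b hN) := by
    rw [Basis.det_apply, ← Matrix.det_transpose (b.toMatrix _), ← Matrix.det_diagonal,
      ← Matrix.det_mul]
    congr 1
    ext i j
    simp [bN', Matrix.diagonal_mul, Basis.toMatrix_apply, a, b]
  have hassoc : Associated (Matrix.of fun i => (bN i : ι → F[X])).det (∏ i, a i) := by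
    refine (Matrix.associated_det_of_span_rows_eq (Q := Matrix.of fun i => (bN' i : ι → F[X]))
      ?_).trans ?_
    · exact bN.span_range_coe.trans bN'.span_range_coe.symm
    · exact hdet ▸ (associated_mul_unit_right _ _ (b.isUnit_det _)).symm
  have : ∀ i, Module.Finite F (F[X] ⧸ Ideal.span {a i}) :=
    fun i => (AdjoinRoot.powerBasis (ha i)).finite
  rw [finrank_quotient_eq_sum F b hN,
    natDegree_eq_of_degree_eq (degree_eq_degree_of_associated hassoc),
    natDegree_prod _ _ fun i _ => ha i]
  simp_rw [finrank_quotient_span_eq_natDegree]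
  rfl

theorem finrank_quotient_span_rows_eq_natDegree {K : Type*} [Fintype K] {G : Matrix K ι F[X]}
    {s₀ : ι → K} (hs₀ : (G.submatrix s₀ id).det ≠ 0) {d : F[X]}
    (hddvd : ∀ s : ι → K, d ∣ (G.submatrix s id).det)
    (hdgcd : ∀ e : F[X], (∀ s : ι → K, e ∣ (G.submatrix s id).det) → e ∣ d) :
    finrank F ((ι → F[X]) ⧸ span F[X] (Set.range G)) = d.natDegree := by
  have hN : finrank F[X] (span F[X] (Set.range G)) = finrank F[X] (ι → F[X]) :=
    (Matrix.finrank_span_rows_of_det_submatrix_ne_zero hs₀).trans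
      (finrank_fintype_fun_eq_card _).symm
  set bN := smithNormalFormBotBasis (Pi.basisFun F[X] ι) hN
  have hspan := bN.span_range_coe
  rw [finrank_quotient_eq_natDegree_det bN]
  refine natDegree_eq_of_degree_eq (degree_eq_degree_of_associated (associated_of_dvd_dvd ?_ ?_))
  · refine hdgcd _ (Matrix.det_dvd_det_submatrix_of_rows_mem_span fun r => ?_)
    change G r ∈ span F[X] (Set.range fun i => (bN i : ι → F[X]))
    rw [hspan]; exact subset_span ⟨r, rfl⟩
  · exact Matrix.dvd_det_of_rows_mem_span (fun i => (bN i).2) hddvd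

end PolynomialLattice

section LiftedGeneratorMatrix

variable {R : Type*} [CommRing R] {ι κ : Type*} [Fintype ι] [DecidableEq ι]

noncomputable def piQuotientMk (f : ι → R) : (ι → R) →ₗ[R] Π i, R ⧸ Ideal.span {f i} :=
  (quotientPi fun i => Ideal.span {f i}).toLinearMap ∘ₗ
    (pi Set.univ fun i => Ideal.span {f i}).mkQ

theorem piQuotientMk_surjective (f : ι → R) : Function.Surjective (piQuotientMk f) :=
  (quotientPi _).surjective.comp (mkQ_surjective _)

theorem ker_piQuotientMk (f : ι → R) :
    LinearMap.ker (piQuotientMk f) = span R (Set.range fun i => Pi.single i (f i)) := by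
  rw [piQuotientMk, LinearEquiv.ker_comp, ker_mkQ, ← iSup_map_single,
    ← Set.iUnion_singleton_eq_range, span_iUnion]
  simp_rw [Ideal.span, map_span, Set.image_singleton]
  rfl

variable {f : ι → R} {gen : κ → Π i, R ⧸ Ideal.span {f i}} {G : Matrix (κ ⊕ ι) ι R}

theorem map_piQuotientMk_span_rows
    (hGgen : ∀ j i, Ideal.Quotient.mk _ (G (Sum.inl j) i) = gen j i)
    (hGdiag : ∀ i, G (Sum.inr i) = Pi.single i (f i)) :
    (span R (Set.range G)).map (piQuotientMk f) = span R (Set.range gen) := by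
  have hinl : ∀ j, piQuotientMk f (G (Sum.inl j)) = gen j := fun j => funext (hGgen j)
  refine le_antisymm ?_ (span_le.2 ?_)
  · rw [map_le_iff_le_comap, span_le]
    rintro _ ⟨j | i, rfl⟩
    · rw [SetLike.mem_coe, mem_comap, hinl]
      exact subset_span ⟨j, rfl⟩
    · have : G (Sum.inr i) ∈ LinearMap.ker (piQuotientMk f) := by
        rw [ker_piQuotientMk, hGdiag]
        exact subset_span ⟨i, rfl⟩
      rw [SetLike.mem_coe, mem_comap, LinearMap.mem_ker.1 this]
      exact zero_mem _
  · rintro _ ⟨j, rfl⟩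
    exact ⟨G (Sum.inl j), subset_span ⟨_, rfl⟩, hinl j⟩

noncomputable def quotientSpanEquivQuotientSpanRows
    (hGgen : ∀ j i, Ideal.Quotient.mk _ (G (Sum.inl j) i) = gen j i)
    (hGdiag : ∀ i, G (Sum.inr i) = Pi.single i (f i)) :
    ((Π i, R ⧸ Ideal.span {f i}) ⧸ span R (Set.range gen)) ≃ₗ[R]
      (ι → R) ⧸ span R (Set.range G) :=
  (quotEquivOfEq _ _ (map_piQuotientMk_span_rows hGgen hGdiag).symm).trans
    (quotEquivQuotMapOfKerLE _ (piQuotientMk_surjective f) _ <| by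
      rw [ker_piQuotientMk, span_le]
      rintro _ ⟨i, rfl⟩
      exact subset_span ⟨Sum.inr i, hGdiag i⟩).symm

end LiftedGeneratorMatrix

theorem stmt4_general (F : Type*) [Field F]
    (ℓ : ℕ)
    (m : Fin ℓ → ℕ) (hm : ∀ i, 1 ≤ m i)
    (lam : Fin ℓ → F)
    (f : Fin ℓ → Polynomial F) (hf : ∀ i, f i = X ^ (m i) - C (lam i))
    (ρ : ℕ) (gen : Fin ρ → Π i, Polynomial F ⧸ Ideal.span {f i})
    (Ccode : Submodule (Polynomial F) (Π i, Polynomial F ⧸ Ideal.span {f i}))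
    (hC : Ccode = Submodule.span (Polynomial F) (Set.range gen))
    -- the lifted generator matrix G : first ρ rows are representatives of the
    -- generators, last ℓ rows are diag(x^{mᵢ} − λᵢ)
    (G : Matrix (Fin ρ ⊕ Fin ℓ) (Fin ℓ) (Polynomial F))
    (hGgen : ∀ (j : Fin ρ) (i : Fin ℓ),
      Ideal.Quotient.mk (Ideal.span {f i}) (G (Sum.inl j) i) = gen j i)
    (hGdiag : ∀ (i' i : Fin ℓ), G (Sum.inr i') i = if i' = i then f i else 0)
    -- d = 𝔡_ℓ(G), the monic gcd of all ℓ×ℓ minors of G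
    (d : Polynomial F)
    (hddvd : ∀ s : Fin ℓ → (Fin ρ ⊕ Fin ℓ), d ∣ (G.submatrix s id).det)
    (hdgcd : ∀ e : Polynomial F,
      (∀ s : Fin ℓ → (Fin ρ ⊕ Fin ℓ), e ∣ (G.submatrix s id).det) → e ∣ d) :
    Module.finrank F (Submodule.restrictScalars F Ccode) = (∑ i, m i) - d.natDegree := by
  subst hC
  have hfne : ∀ i, f i ≠ 0 := fun i =>
    hf i ▸ (monic_X_pow_sub_C _ (Nat.one_le_iff_ne_zero.1 (hm i))).ne_zero
  have hrow : ∀ i, G (Sum.inr i) = Pi.single i (f i) := fun i => by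
    funext k
    by_cases h : i = k <;> simp [hGdiag, h]
  have hminor : (G.submatrix Sum.inr id).det ≠ 0 := by
    rw [show G.submatrix Sum.inr id = Matrix.diagonal f from
      Matrix.ext fun i j => by simp [hrow, Matrix.diagonal_apply, Pi.single_apply, eq_comm],
      Matrix.det_diagonal]
    exact Finset.prod_ne_zero_iff.2 fun i _ => hfne i
  have : ∀ i, Module.Finite F (F[X] ⧸ Ideal.span {f i}) :=
    fun i => (AdjoinRoot.powerBasis (hfne i)).finite
  have hV : finrank F (Π i, F[X] ⧸ Ideal.span {f i}) = ∑ i, m i := by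
    simp_rw [finrank_pi_fintype, finrank_quotient_span_eq_natDegree, hf,
      natDegree_X_pow_sub_C]
  have hquot : finrank F ((Π i, F[X] ⧸ Ideal.span {f i}) ⧸
      (span F[X] (Set.range gen)).restrictScalars F) = d.natDegree := by
    rw [((Quotient.restrictScalarsEquiv F _).trans
      ((quotientSpanEquivQuotientSpanRows hGgen hrow).restrictScalars F)).finrank_eq]
    exact finrank_quotient_span_rows_eq_natDegree hminor hddvd hdgcd
  have := finrank_quotient_add_finrank ((span F[X] (Set.range gen)).restrictScalars F)
  omega

theorem stmt4 (F : Type*) [Field F] [Fintype F]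
    (ℓ : ℕ) (hℓ : 1 ≤ ℓ)
    (m : Fin ℓ → ℕ) (hm : ∀ i, 1 ≤ m i)
    (lam : Fin ℓ → F) (hlam : ∀ i, lam i ≠ 0)
    (f : Fin ℓ → Polynomial F) (hf : ∀ i, f i = X ^ (m i) - C (lam i))
    (ρ : ℕ) (gen : Fin ρ → Π i, Polynomial F ⧸ Ideal.span {f i})
    (Ccode : Submodule (Polynomial F) (Π i, Polynomial F ⧸ Ideal.span {f i}))
    (hC : Ccode = Submodule.span (Polynomial F) (Set.range gen))
    -- the lifted generator matrix G : first ρ rows are representatives of the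
    -- generators, last ℓ rows are diag(x^{mᵢ} − λᵢ)
    (G : Matrix (Fin ρ ⊕ Fin ℓ) (Fin ℓ) (Polynomial F))
    (hGgen : ∀ (j : Fin ρ) (i : Fin ℓ),
      Ideal.Quotient.mk (Ideal.span {f i}) (G (Sum.inl j) i) = gen j i)
    (hGdiag : ∀ (i' i : Fin ℓ), G (Sum.inr i') i = if i' = i then f i else 0)
    -- d = 𝔡_ℓ(G), the monic gcd of all ℓ×ℓ minors of G
    (d : Polynomial F)
    (hdmonic : d.Monic)
    (hddvd : ∀ s : Fin ℓ → (Fin ρ ⊕ Fin ℓ), d ∣ (G.submatrix s id).det)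
    (hdgcd : ∀ e : Polynomial F,
      (∀ s : Fin ℓ → (Fin ρ ⊕ Fin ℓ), e ∣ (G.submatrix s id).det) → e ∣ d) :
    Module.finrank F (Submodule.restrictScalars F Ccode) = (∑ i, m i) - d.natDegree :=
  stmt4_general F ℓ m hm lam f hf ρ gen Ccode hC G hGgen hGdiag d hddvd hdgcd
end

section
/- Let λ be a nonzero element of the finite field F with λ² = 1, let m ≥ 1, and let g be a monic divisor of x^m − λ in F[x]. Let C ⊆ F^m be the λ-constacyclic code corresponding to the ideal of F[x]/(x^m − λ) generated by g, under the coefficient identification of F[x]/(x^m − λ) with F^m. Then C ∩ C^⊥ is the λ-constacyclic code corresponding to the ideal of F[x]/(x^m − λ) generated by lcm( g(x), (x^m − λ)/g*(x) ), where g* is the reciprocal polynomial of g (the lcm being taken up to associates in F[x]). -/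
open Polynomial

private lemma coeffSum {F : Type*} [Semiring F] {N : ℕ} (c : ℕ → F) (i : ℕ) :
    (∑ k ∈ Finset.range N, C (c k) * X ^ k).coeff i = if i < N then c i else 0 := by
  rw [finset_sum_coeff]
  simp only [coeff_C_mul, coeff_X_pow, mul_ite, mul_one, mul_zero]
  by_cases h : i < N
  · rw [if_pos h, Finset.sum_eq_single i]
    · rw [if_pos rfl]
    · intro k _ hk; rw [if_neg (by omega)]
    · intro hk; simp at hk; omega
  · rw [if_neg h]
    exact Finset.sum_eq_zero fun k hk => by
      rw [Finset.mem_range] at hk; rw [if_neg (by omega)]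

private lemma coeffP {F : Type*} [Semiring F] {m : ℕ} (a : Fin m → F) (i : ℕ) :
    (∑ k : Fin m, C (a k) * X ^ (k : ℕ)).coeff i = if h : i < m then a ⟨i, h⟩ else 0 := by
  have : (∑ k : Fin m, C (a k) * X ^ (k : ℕ))
      = ∑ k ∈ Finset.range m, C (if h : k < m then a ⟨k, h⟩ else 0) * X ^ k := by
    rw [← Fin.sum_univ_eq_sum_range]
    exact Finset.sum_congr rfl fun k _ => by rw [dif_pos k.isLt]
  rw [this, coeffSum]
  split_ifs with h <;> simp [h]

private lemma memQ {F : Type*} [CommRing F] {f d : Polynomial F} (hd : d ∣ f) (p : Polynomial F) :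
    Ideal.Quotient.mk (Ideal.span {f}) p ∈ Ideal.span {Ideal.Quotient.mk (Ideal.span {f}) d}
      ↔ d ∣ p := by
  constructor
  · intro hmem
    rw [Ideal.mem_span_singleton] at hmem
    obtain ⟨c, hc⟩ := hmem
    obtain ⟨q, rfl⟩ := Ideal.Quotient.mk_surjective c
    rw [← map_mul, Ideal.Quotient.eq, Ideal.mem_span_singleton] at hc
    obtain ⟨r, hr⟩ := hc
    obtain ⟨e, he⟩ := hd
    exact ⟨q + e * r, by linear_combination hr + r * he⟩
  · rintro ⟨q, rfl⟩
    rw [map_mul]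
    exact Ideal.mul_mem_right _ _ (Ideal.subset_span rfl)

private lemma bil {F : Type*} [CommRing F] {m : ℕ} (p q : Polynomial F) (hq : q.natDegree < m) :
    ∑ i ∈ Finset.range m, p.coeff i * q.coeff i = (p * q.reverse).coeff q.natDegree := by
  rw [coeff_mul, Finset.Nat.sum_antidiagonal_eq_sum_range_succ_mk]
  rw [← Finset.sum_subset (Finset.range_subset_range.2 hq)
    (fun k _ hk2 => by
      simp only [Finset.mem_range, not_lt] at hk2
      rw [coeff_eq_zero_of_natDegree_lt (show q.natDegree < k by omega), mul_zero])]
  refine Finset.sum_congr rfl fun k hk => ?_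
  rw [Finset.mem_range] at hk
  rw [coeff_reverse, revAt_le (Nat.sub_le _ _), Nat.sub_sub_self (by omega : k ≤ q.natDegree)]

theorem stmt5 (F : Type*) [Field F] [Fintype F]
    (lam : F) (hlam0 : lam ≠ 0) (hlam2 : lam ^ 2 = 1)
    (m : ℕ) (hm : 1 ≤ m)
    (f : Polynomial F) (hf : f = X ^ m - C lam)
    (g : Polynomial F) (hgmonic : g.Monic) (hgdvd : g ∣ f)
    -- the coefficient identification of F^m with F[x]/(x^m − λ)
    (blk : (Fin m → F) → Polynomial F ⧸ Ideal.span {f})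
    (hblk : ∀ b, blk b
      = Ideal.Quotient.mk (Ideal.span {f}) (∑ k : Fin m, C (b k) * X ^ (k : ℕ)))
    -- L = lcm(g, (x^m − λ)/g*), up to associates
    (L : Polynomial F)
    (hL1 : g ∣ L) (hL2 : f / g.reverse ∣ L)
    (hL3 : ∀ e : Polynomial F, g ∣ e → f / g.reverse ∣ e → L ∣ e) :
    -- the hull C ∩ C^⊥ is the constacyclic code generated by L
    {a : Fin m → F |
        blk a ∈ Ideal.span {Ideal.Quotient.mk (Ideal.span {f}) g} ∧
        ∀ b : Fin m → F, blk b ∈ Ideal.span {Ideal.Quotient.mk (Ideal.span {f}) g} →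
          ∑ k, a k * b k = 0}
      = {a : Fin m → F | blk a ∈ Ideal.span {Ideal.Quotient.mk (Ideal.span {f}) L}} := by
  have hm0 : m ≠ 0 := by omega
  have hfm : f.Monic := hf ▸ monic_X_pow_sub_C lam hm0
  have hf0 : f ≠ 0 := hfm.ne_zero
  have hfdeg : f.natDegree = m := hf ▸ natDegree_X_pow_sub_C
  obtain ⟨h, hfgh⟩ := hgdvd
  have hgdvd : g ∣ f := ⟨h, hfgh⟩
  have hg0 : g ≠ 0 := hgmonic.ne_zero
  have hhm : h.Monic := hgmonic.of_mul_monic_left (hfgh ▸ hfm)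
  have hh0 : h ≠ 0 := hhm.ne_zero
  have hdegs : g.natDegree + h.natDegree = m := by
    rw [← hfdeg, hfgh, natDegree_mul hg0 hh0]
  have hfc0 : f.coeff 0 = -lam := by
    rw [hf, coeff_sub, coeff_X_pow, coeff_C, if_neg (by omega), if_pos rfl, zero_sub]
  have hghc0 : g.coeff 0 * h.coeff 0 = -lam := by
    rw [← mul_coeff_zero, ← hfgh, hfc0]
  have hgc0 : g.coeff 0 ≠ 0 := fun hc => by
    rw [hc, zero_mul] at hghc0; exact hlam0 (by simpa using hghc0.symm)
  have hhc0 : h.coeff 0 ≠ 0 := fun hc => by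
    rw [hc, mul_zero] at hghc0; exact hlam0 (by simpa using hghc0.symm)
  have hgrevdeg : g.reverse.natDegree = g.natDegree := by
    rw [reverse_natDegree, natTrailingDegree_eq_zero.2 (Or.inr hgc0), Nat.sub_zero]
  have hhrevdeg : h.reverse.natDegree = h.natDegree := by
    rw [reverse_natDegree, natTrailingDegree_eq_zero.2 (Or.inr hhc0), Nat.sub_zero]
  have hgrev0 : g.reverse ≠ 0 := fun hc => hg0 (reverse_eq_zero.1 hc)
  have hhrev0 : h.reverse ≠ 0 := fun hc => hh0 (reverse_eq_zero.1 hc)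
  have hCl : (C lam : Polynomial F) * C lam = 1 := by
    rw [← C_mul, ← sq, hlam2, C_1]
  have hfrev : f.reverse = -C lam * f := by
    have h1 : f.reverse = reflect m f := by
      rw [show f.reverse = reflect f.natDegree f from rfl, hfdeg]
    rw [h1, hf, reflect_sub, reflect_C, reflect_monomial, revAt_le le_rfl, Nat.sub_self, pow_zero]
    linear_combination (-1 : Polynomial F) * hCl
  have hrevmul : g.reverse * h.reverse = -C lam * f := by
    rw [← reverse_mul_of_domain, ← hfgh, hfrev]
  have hfactor : f = g.reverse * (-C lam * h.reverse) := by
    have h2 : -C lam * (-C lam * f) = f := by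
      rw [← mul_assoc, neg_mul_neg, hCl, one_mul]
    rw [← h2, ← hrevmul]; ring
  have hdiv : f / g.reverse = -C lam * h.reverse := by
    conv_lhs => rw [hfactor]
    rw [mul_div_cancel_left₀ _ hgrev0]
  have hdvd_iff : ∀ e : Polynomial F, (f / g.reverse ∣ e ↔ h.reverse ∣ e) := by
    intro e
    rw [hdiv]
    constructor
    · rintro ⟨c, rfl⟩; exact ⟨-C lam * c, by ring⟩
    · rintro ⟨c, rfl⟩
      exact ⟨-C lam * c, by linear_combination (-(h.reverse * c)) * hCl⟩
  have hhrevf : h.reverse ∣ f := ⟨-C lam * g.reverse, by rw [hfactor]; ring⟩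
  have hLf : L ∣ f := hL3 f hgdvd ((hdvd_iff f).2 hhrevf)
  -- the polynomial associated to a vector
  set P : (Fin m → F) → Polynomial F := fun a => ∑ k : Fin m, C (a k) * X ^ (k : ℕ) with hP
  have hPdeg : ∀ a, (P a).natDegree < m := by
    intro a
    have h3 : (P a).natDegree ≤ m - 1 := by
      apply natDegree_sum_le_of_forall_le
      intro k _
      exact le_trans (natDegree_C_mul_le _ _) (by rw [natDegree_X_pow]; omega)
    omega
  have hPsur : ∀ p : Polynomial F, p.natDegree < m → P (fun k => p.coeff k) = p := by
    intro p hp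
    ext i
    rw [hP]
    rw [coeffP]
    split_ifs with hi
    · rfl
    · exact (coeff_eq_zero_of_natDegree_lt (by omega)).symm
  have hpair : ∀ a b : Fin m → F,
      ∑ k, a k * b k = ∑ i ∈ Finset.range m, (P a).coeff i * (P b).coeff i := by
    intro a b
    rw [← Fin.sum_univ_eq_sum_range]
    refine Finset.sum_congr rfl fun k _ => ?_
    rw [hP]
    rw [coeffP, coeffP, dif_pos k.isLt, dif_pos k.isLt]
  -- backward direction of the dual characterization
  have dualFrom : ∀ a : Fin m → F, h.reverse ∣ P a →
      ∀ b : Fin m → F, g ∣ P b → ∑ k, a k * b k = 0 := by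
    rintro a ⟨t, ht⟩ b ⟨u, hu⟩
    rw [hpair a b, bil _ _ (hPdeg b)]
    rcases eq_or_ne u 0 with rfl | hu0
    · rw [mul_zero] at hu
      simp [hu]
    rcases eq_or_ne t 0 with rfl | ht0
    · rw [mul_zero] at ht
      simp [ht]
    have htdeg : h.natDegree + t.natDegree < m := by
      have h3 : (P a).natDegree = h.reverse.natDegree + t.natDegree :=
        ht ▸ natDegree_mul hhrev0 ht0
      have h4 := hPdeg a
      omega
    have hd : (P b).natDegree = g.natDegree + u.natDegree := by
      rw [hu, natDegree_mul hg0 hu0]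
    have hprod : P a * (P b).reverse = -C lam * (t * u.reverse * f) := by
      rw [ht, hu, reverse_mul_of_domain]
      linear_combination (t * u.reverse) * hrevmul
    rw [hprod, hf]
    have hexp : -C lam * (t * u.reverse * (X ^ m - C lam))
        = (-C lam * (t * u.reverse)) * X ^ m + C lam * (C lam * (t * u.reverse)) := by ring
    rw [hexp, coeff_add, coeff_mul_X_pow']
    rw [if_neg (by have := hPdeg b; omega)]
    have hvdeg : (t * u.reverse).natDegree < (P b).natDegree := by
      have h4 : (t * u.reverse).natDegree ≤ t.natDegree + u.reverse.natDegree :=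
        natDegree_mul_le
      have h5 := u.reverse_natDegree_le
      omega
    rw [coeff_C_mul, coeff_C_mul, coeff_eq_zero_of_natDegree_lt hvdeg]
    ring
  -- forward direction of the dual characterization
  have dualTo : ∀ a : Fin m → F,
      (∀ b : Fin m → F, g ∣ P b → ∑ k, a k * b k = 0) → h.reverse ∣ P a := by
    intro a hdual
    set p := P a with hpdef
    set w := p * g.reverse with hw
    -- coefficients of p * g.reverse vanish on [g.natDegree, m)
    have hwc : ∀ i, g.natDegree ≤ i → i < m → w.coeff i = 0 := by
      intro i hi1 hi2
      have hq0 : g * X ^ (i - g.natDegree) ≠ 0 := mul_ne_zero hg0 (pow_ne_zero _ X_ne_zero)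
      have hqdeg : (g * X ^ (i - g.natDegree)).natDegree = i := by
        rw [natDegree_mul hg0 (pow_ne_zero _ X_ne_zero), natDegree_X_pow]; omega
      have hb : P (fun k => (g * X ^ (i - g.natDegree)).coeff k) = g * X ^ (i - g.natDegree) :=
        hPsur _ (by omega)
      have h6 := hdual (fun k => (g * X ^ (i - g.natDegree)).coeff k)
        (by rw [hb]; exact ⟨X ^ (i - g.natDegree), rfl⟩)
      rwa [hpair, hb, bil _ _ (by omega), hqdeg, reverse_mul_X_pow] at h6
    set s := ∑ i ∈ Finset.range g.natDegree, C (w.coeff (m + i)) * X ^ i with hs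
    set r := ∑ i ∈ Finset.range g.natDegree, C (w.coeff i) * X ^ i with hr
    have hwdeg : w.natDegree ≤ m - 1 + g.natDegree := by
      rw [hw]
      refine le_trans natDegree_mul_le ?_
      have h7 : p.natDegree < m := by rw [hpdef]; exact hPdeg a
      omega
    have hweq : w = r + X ^ m * s := by
      ext n
      rw [coeff_add, hr, coeffSum, show (X ^ m * s : Polynomial F) = s * X ^ m from mul_comm _ _,
        coeff_mul_X_pow', hs, coeffSum]
      by_cases h7 : m ≤ n
      · rw [if_pos h7, if_neg (show ¬ n < g.natDegree by omega)]
        by_cases h8 : n - m < g.natDegree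
        · rw [if_pos h8, zero_add]
          congr 1
          omega
        · rw [if_neg h8, zero_add]
          exact coeff_eq_zero_of_natDegree_lt (by omega)
      · rw [if_neg h7, add_zero]
        by_cases h9 : n < g.natDegree
        · rw [if_pos h9]
        · rw [if_neg h9]
          exact hwc n (by omega) (by omega)
    have hsdeg : s = 0 ∨ s.natDegree < g.natDegree := by
      rcases Nat.eq_zero_or_pos g.natDegree with h10 | h10
      · left; rw [hs, h10]; simp
      · right
        refine lt_of_le_of_lt (natDegree_sum_le_of_forall_le _ _ fun i hi => ?_)
          (show g.natDegree - 1 < g.natDegree by omega)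
        rw [Finset.mem_range] at hi
        exact le_trans (natDegree_C_mul_le _ _) (by rw [natDegree_X_pow]; omega)
    have hrdeg : r = 0 ∨ r.natDegree < g.natDegree := by
      rcases Nat.eq_zero_or_pos g.natDegree with h10 | h10
      · left; rw [hr, h10]; simp
      · right
        refine lt_of_le_of_lt (natDegree_sum_le_of_forall_le _ _ fun i hi => ?_)
          (show g.natDegree - 1 < g.natDegree by omega)
        rw [Finset.mem_range] at hi
        exact le_trans (natDegree_C_mul_le _ _) (by rw [natDegree_X_pow]; omega)
    have hA : g.reverse * (p + C lam * (s * h.reverse)) = r + C lam * s := by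
      have hweq' : p * g.reverse = r + X ^ m * s := by rw [← hw]; exact hweq
      linear_combination hweq' + s * hfactor - s * hf
    have hR : r + C lam * s = 0 ∨ (r + C lam * s).natDegree < g.natDegree := by
      rcases hrdeg with hr1 | hr1
      · rcases hsdeg with hs1 | hs1
        · left; rw [hr1, hs1]; ring
        · right; rw [hr1, zero_add]
          exact lt_of_le_of_lt (natDegree_C_mul_le _ _) hs1
      · rcases hsdeg with hs1 | hs1
        · right; rw [hs1, mul_zero, add_zero]; exact hr1
        · right
          exact lt_of_le_of_lt (natDegree_add_le _ _)
            (max_lt hr1 (lt_of_le_of_lt (natDegree_C_mul_le _ _) hs1))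
    have hA0 : p + C lam * (s * h.reverse) = 0 := by
      by_contra hne
      rcases hR with h11 | h11
      · rw [h11] at hA
        exact (mul_ne_zero hgrev0 hne) hA
      · have h12 : (g.reverse * (p + C lam * (s * h.reverse))).natDegree
            = g.natDegree + (p + C lam * (s * h.reverse)).natDegree := by
          rw [natDegree_mul hgrev0 hne, hgrevdeg]
        rw [hA] at h12
        omega
    exact ⟨-C lam * s, by linear_combination hA0⟩
  -- assembly
  ext a
  simp only [Set.mem_setOf_eq, hblk]
  rw [memQ hgdvd, memQ hLf]
  constructor
  · rintro ⟨h1, h2⟩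
    refine hL3 _ h1 ((hdvd_iff _).2 (dualTo a fun b hb => h2 b ?_))
    rw [memQ hgdvd]
    exact hb
  · intro h1
    exact ⟨dvd_trans hL1 h1, fun b hb =>
      dualFrom a ((hdvd_iff _).1 (dvd_trans hL2 h1)) b ((memQ hgdvd _).1 hb)⟩
end

section
/- Let C be an F[x]-submodule of V = R_1 × ⋯ × R_ℓ generated by elements g_1, …, g_ρ ∈ V, and for each 1 ≤ i ≤ ℓ let g_i(x) be the monic gcd in F[x] of x^{m_i} − λ_i together with polynomial representatives of π_i(g_1), …, π_i(g_ρ). Suppose the polynomials (x^{m_1} − λ_1)/g_1(x), …, (x^{m_ℓ} − λ_ℓ)/g_ℓ(x) are pairwise coprime in F[x]. Then for every index i and every a ∈ π_i(C), the tuple of V having a in the i-th coordinate and 0 in all other coordinates belongs to C. -/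
/-!
Put `hⱼ = fⱼ / gⱼ`. Every `πⱼ(C)` is generated by `gⱼ`, so it is killed by `hⱼ`. Since `hᵢ` is
coprime to `e = ∏_{j ≠ i} hⱼ`, write `p hᵢ + q e = 1`; then for `c ∈ C` the element
`(q e) • c ∈ C` has `i`-th coordinate `(1 - p hᵢ) cᵢ = cᵢ` and all other coordinates `0`.
-/

open Polynomial

theorem Submodule.pi_single_mem_of_pairwise_isCoprime {R ι : Type*} [CommSemiring R] [Fintype ι]
    [DecidableEq ι] {M : ι → Type*} [∀ i, AddCommMonoid (M i)] [∀ i, Module R (M i)]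
    (C : Submodule R (Π i, M i)) (h : ι → R) (hann : ∀ c ∈ C, ∀ j, h j • c j = 0)
    (hcop : Pairwise fun j k => IsCoprime (h j) (h k)) (i : ι) {c : Π i, M i} (hc : c ∈ C) :
    Pi.single i (c i) ∈ C := by
  set e := ∏ j ∈ Finset.univ.erase i, h j
  obtain ⟨p, q, hpq⟩ : IsCoprime (h i) e :=
    IsCoprime.prod_right fun j hj => hcop (Finset.ne_of_mem_erase hj).symm
  suffices Pi.single i (c i) = (q * e) • c from this ▸ C.smul_mem _ hc
  funext j
  rcases eq_or_ne j i with rfl | hji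
  · calc Pi.single j (c j) j = (p * h j + q * e) • c j := by
          rw [hpq, one_smul, Pi.single_eq_same]
      _ = (q * e) • c j := by rw [add_smul, mul_smul, hann c hc, smul_zero, zero_add]
  · obtain ⟨e', he'⟩ :=
      Finset.dvd_prod_of_mem h (Finset.mem_erase.mpr ⟨hji, Finset.mem_univ j⟩)
    have hqe : q * e = q * e' * h j := by rw [show e = h j * e' from he']; ring
    rw [Pi.single_eq_of_ne hji, Pi.smul_apply, hqe, mul_smul, hann c hc, smul_zero]

theorem Ideal.Quotient.smul_eq_zero_of_mem_span_mk {A : Type*} [CommRing A] {f g h : A}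
    (hgh : g * h = f) {x : A ⧸ Ideal.span {f}}
    (hx : x ∈ Submodule.span A {Ideal.Quotient.mk (Ideal.span {f}) g}) : h • x = 0 := by
  obtain ⟨s, rfl⟩ := Submodule.mem_span_singleton.mp hx
  rw [smul_smul, Algebra.smul_def, Ideal.Quotient.algebraMap_eq, ← map_mul,
    Ideal.Quotient.eq_zero_iff_mem, Ideal.mem_span_singleton, ← hgh]
  exact ⟨s, by ring⟩

theorem stmt7_general (F : Type*) [Field F]
    (ℓ : ℕ)
    (f : Fin ℓ → Polynomial F)
    (Ccode : Submodule (Polynomial F) (Π i, Polynomial F ⧸ Ideal.span {f i}))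
    (g : Fin ℓ → Polynomial F)
    (hgmonic : ∀ i, (g i).Monic)
    (hgdvd : ∀ i, g i ∣ f i)
    (hgspan : ∀ i, Submodule.map (LinearMap.proj i :
        (Π j, Polynomial F ⧸ Ideal.span {f j}) →ₗ[Polynomial F] Polynomial F ⧸ Ideal.span {f i})
        Ccode
      = Submodule.span (Polynomial F) {Ideal.Quotient.mk (Ideal.span {f i}) (g i)})
    (hcop : ∀ i j, i ≠ j → IsCoprime (f i / g i) (f j / g j)) :
    ∀ i : Fin ℓ, ∀ a ∈ Submodule.map (LinearMap.proj i :
        (Π j, Polynomial F ⧸ Ideal.span {f j}) →ₗ[Polynomial F] Polynomial F ⧸ Ideal.span {f i})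
        Ccode,
      Pi.single i a ∈ Ccode := by
  rintro i _ ⟨c, hc, rfl⟩
  refine Ccode.pi_single_mem_of_pairwise_isCoprime (fun j => f j / g j) ?_ hcop i hc
  intro c hc j
  exact Ideal.Quotient.smul_eq_zero_of_mem_span_mk
    (EuclideanDomain.mul_div_cancel' (hgmonic j).ne_zero (hgdvd j))
    (hgspan j ▸ Submodule.mem_map_of_mem hc)

theorem stmt7 (F : Type*) [Field F] [Fintype F]
    (ℓ : ℕ) (hℓ : 1 ≤ ℓ)
    (m : Fin ℓ → ℕ) (hm : ∀ i, 1 ≤ m i)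
    (lam : Fin ℓ → F) (hlam : ∀ i, lam i ≠ 0)
    (f : Fin ℓ → Polynomial F) (hf : ∀ i, f i = X ^ (m i) - C (lam i))
    (ρ : ℕ) (gen : Fin ρ → Π i, Polynomial F ⧸ Ideal.span {f i})
    (Ccode : Submodule (Polynomial F) (Π i, Polynomial F ⧸ Ideal.span {f i}))
    (hC : Ccode = Submodule.span (Polynomial F) (Set.range gen))
    (g : Fin ℓ → Polynomial F)
    (hgmonic : ∀ i, (g i).Monic)
    (hgdvd : ∀ i, g i ∣ f i)
    (hgspan : ∀ i, Submodule.map (LinearMap.proj i :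
        (Π j, Polynomial F ⧸ Ideal.span {f j}) →ₗ[Polynomial F] Polynomial F ⧸ Ideal.span {f i})
        Ccode
      = Submodule.span (Polynomial F) {Ideal.Quotient.mk (Ideal.span {f i}) (g i)})
    (hcop : ∀ i j, i ≠ j → IsCoprime (f i / g i) (f j / g j)) :
    ∀ i : Fin ℓ, ∀ a ∈ Submodule.map (LinearMap.proj i :
        (Π j, Polynomial F ⧸ Ideal.span {f j}) →ₗ[Polynomial F] Polynomial F ⧸ Ideal.span {f i})
        Ccode,
      Pi.single i a ∈ Ccode :=
  stmt7_general F ℓ f Ccode g hgmonic hgdvd hgspan hcop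
end

section
/- Let F = F_4 = F_2(ω) where ω² + ω + 1 = 0. Let C ⊆ F^10 be the row space of the 5 × 10 matrix with rows: (1,0,0,1,1, 0,0,0,0,0), (0,1,0,ω,ω², 0,0,0,0,0), (0,0,1,1,ω², 0,0,0,0,0), (0,0,0,0,0, 1,0,ω²,ω²,1), (0,0,0,0,0, 0,1,1,ω,1). Then: (i) C is invariant under the multi-twisted shift T_Λ with Λ = (ω, ω) and block lengths (5, 5); (ii) dim_F C = 5; (iii) C ∩ C^⊥ = {0}, i.e., C is LCD. In particular there is an LCD (ω, ω)-MT code over F_4 with equal block polynomials x⁵ − ω (so that x^{m_1} − λ_1 and x^{m_2} − λ_2 are not coprime). -/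
/-!
STATEMENT 14: Over F₄ = F₂(ω) with ω² + ω + 1 = 0, the row space C of the given 5×10
matrix is an (ω,ω)-MT code with block lengths (5,5), dim C = 5, and C is LCD
(even though x⁵ − ω and x⁵ − ω are not coprime).
-/

variable (F : Type*) [Field F]

/-- The Euclidean dual of a linear code in `F^10`. -/
noncomputable def dualCode (C : Submodule F (Fin 10 → F)) : Submodule F (Fin 10 → F) :=
  ⨅ b ∈ C, LinearMap.ker
    (∑ k : Fin 10, b k • (LinearMap.proj k : (Fin 10 → F) →ₗ[F] F))

variable (ω : F)

/-- The 5×10 generator matrix. -/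
def Gmat : Fin 5 → Fin 10 → F :=
  ![![1, 0, 0, 1, 1, 0, 0, 0, 0, 0],
    ![0, 1, 0, ω, ω^2, 0, 0, 0, 0, 0],
    ![0, 0, 1, 1, ω^2, 0, 0, 0, 0, 0],
    ![0, 0, 0, 0, 0, 1, 0, ω^2, ω^2, 1],
    ![0, 0, 0, 0, 0, 0, 1, 1, ω, 1]]

/-- The code `C`: the row space of `G`. -/
def Ccode : Submodule F (Fin 10 → F) := Submodule.span F (Set.range (Gmat F ω))

/-- The multi-twisted shift `T_Λ` with `Λ = (ω, ω)` and block lengths `(5,5)`. -/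
def Tshift : (Fin 10 → F) → (Fin 10 → F) := fun v =>
  ![ω * v 4, v 0, v 1, v 2, v 3,
    ω * v 9, v 5, v 6, v 7, v 8]

section AuxVec
variable {α : Type*}

@[simp] lemma vec10_five (a₀ a₁ a₂ a₃ a₄ a₅ a₆ a₇ a₈ a₉ : α) :
    ![a₀,a₁,a₂,a₃,a₄,a₅,a₆,a₇,a₈,a₉] (5 : Fin 10) = a₅ := rfl
@[simp] lemma vec10_six (a₀ a₁ a₂ a₃ a₄ a₅ a₆ a₇ a₈ a₉ : α) :
    ![a₀,a₁,a₂,a₃,a₄,a₅,a₆,a₇,a₈,a₉] (6 : Fin 10) = a₆ := rfl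
@[simp] lemma vec10_seven (a₀ a₁ a₂ a₃ a₄ a₅ a₆ a₇ a₈ a₉ : α) :
    ![a₀,a₁,a₂,a₃,a₄,a₅,a₆,a₇,a₈,a₉] (7 : Fin 10) = a₇ := rfl
@[simp] lemma vec10_eight (a₀ a₁ a₂ a₃ a₄ a₅ a₆ a₇ a₈ a₉ : α) :
    ![a₀,a₁,a₂,a₃,a₄,a₅,a₆,a₇,a₈,a₉] (8 : Fin 10) = a₈ := rfl
@[simp] lemma vec10_nine (a₀ a₁ a₂ a₃ a₄ a₅ a₆ a₇ a₈ a₉ : α) :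
    ![a₀,a₁,a₂,a₃,a₄,a₅,a₆,a₇,a₈,a₉] (9 : Fin 10) = a₉ := rfl

@[simp] lemma vec10_two (a₀ a₁ a₂ a₃ a₄ a₅ a₆ a₇ a₈ a₉ : α) :
    ![a₀,a₁,a₂,a₃,a₄,a₅,a₆,a₇,a₈,a₉] (2 : Fin 10) = a₂ := rfl
@[simp] lemma vec10_three (a₀ a₁ a₂ a₃ a₄ a₅ a₆ a₇ a₈ a₉ : α) :
    ![a₀,a₁,a₂,a₃,a₄,a₅,a₆,a₇,a₈,a₉] (3 : Fin 10) = a₃ := rfl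
@[simp] lemma vec10_four (a₀ a₁ a₂ a₃ a₄ a₅ a₆ a₇ a₈ a₉ : α) :
    ![a₀,a₁,a₂,a₃,a₄,a₅,a₆,a₇,a₈,a₉] (4 : Fin 10) = a₄ := rfl
@[simp] lemma vec5_two (a₀ a₁ a₂ a₃ a₄ : α) :
    ![a₀,a₁,a₂,a₃,a₄] (2 : Fin 5) = a₂ := rfl
@[simp] lemma vec5_three (a₀ a₁ a₂ a₃ a₄ : α) :
    ![a₀,a₁,a₂,a₃,a₄] (3 : Fin 5) = a₃ := rfl
@[simp] lemma vec5_four (a₀ a₁ a₂ a₃ a₄ : α) :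
    ![a₀,a₁,a₂,a₃,a₄] (4 : Fin 5) = a₄ := rfl

lemma sum_univ_ten {β : Type*} [AddCommMonoid β] (f : Fin 10 → β) :
    ∑ i, f i = f 0 + f 1 + f 2 + f 3 + f 4 + f 5 + f 6 + f 7 + f 8 + f 9 := by
  simp only [Fin.sum_univ_succ, Fin.sum_univ_zero, add_zero, add_assoc]
  rfl

end AuxVec

set_option maxHeartbeats 1000000 in
theorem stmt14 [Fintype F] (hcard : Fintype.card F = 4)
    (hω : ω ^ 2 + ω + 1 = 0) :
    (∀ u ∈ Ccode F ω, Tshift F ω u ∈ Ccode F ω) ∧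
    Module.finrank F (Ccode F ω) = 5 ∧
    Ccode F ω ⊓ dualCode F (Ccode F ω) = ⊥ := by
  -- characteristic 2
  have h4 : (4 : F) = 0 := by
    have := FiniteField.cast_card_eq_zero F
    rw [hcard] at this
    exact_mod_cast this
  have h2 : (2 : F) = 0 := by
    have : (2 : F) * 2 = 0 := by linear_combination h4
    rcases mul_eq_zero.mp this with h | h <;> exact h
  -- generators are in the code
  have hgen : ∀ i : Fin 5, Gmat F ω i ∈ Ccode F ω := fun i =>
    Submodule.subset_span ⟨i, rfl⟩
  -- images of generators under the shift
  have hg0 : Tshift F ω (Gmat F ω 0) = ω • Gmat F ω 0 + Gmat F ω 1 := by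
    funext i; fin_cases i <;>
      simp [Tshift, Gmat, Matrix.vecHead, Matrix.vecTail] <;>
      first
        | ring1
        | linear_combination (-ω) * h2
        | linear_combination h2 - hω
  have hg1 : Tshift F ω (Gmat F ω 1) = Gmat F ω 0 + Gmat F ω 2 := by
    funext i; fin_cases i <;>
      simp [Tshift, Gmat, Matrix.vecHead, Matrix.vecTail] <;>
      first
        | ring1
        | linear_combination (ω - 1) * hω
        | linear_combination -h2
        | linear_combination -hω + ω * h2
  have hg2 : Tshift F ω (Gmat F ω 2) = Gmat F ω 0 := by
    funext i; fin_cases i <;>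
      simp [Tshift, Gmat, Matrix.vecHead, Matrix.vecTail] <;>
      first
        | ring1
        | linear_combination (ω - 1) * hω
  have hg3 : Tshift F ω (Gmat F ω 3) = ω • Gmat F ω 3 + Gmat F ω 4 := by
    funext i; fin_cases i <;>
      simp [Tshift, Gmat, Matrix.vecHead, Matrix.vecTail] <;>
      first
        | ring1
        | linear_combination (1 - ω) * hω - h2
        | linear_combination (-ω) * hω + ω^2 * h2
        | linear_combination hω - (ω + 1) * h2
  have hg4 : Tshift F ω (Gmat F ω 4) = ω • Gmat F ω 3 := by
    funext i; fin_cases i <;>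
      simp [Tshift, Gmat, Matrix.vecHead, Matrix.vecTail] <;>
      first
        | ring1
        | linear_combination (1 - ω) * hω
  -- linearity of the shift
  have hadd : ∀ x y : Fin 10 → F, Tshift F ω (x + y) = Tshift F ω x + Tshift F ω y := by
    intro x y; funext i; fin_cases i <;> simp [Tshift] <;> ring
  have hsmul : ∀ (c : F) (x : Fin 10 → F), Tshift F ω (c • x) = c • Tshift F ω x := by
    intro c x; funext i; fin_cases i <;> simp [Tshift] <;> ring
  have hzero : Tshift F ω 0 = 0 := by
    funext i; fin_cases i <;> simp [Tshift]
  -- Part (i)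
  have part1 : ∀ u ∈ Ccode F ω, Tshift F ω u ∈ Ccode F ω := by
    intro u hu
    induction hu using Submodule.span_induction with
    | mem x hx =>
        obtain ⟨i, rfl⟩ := hx
        fin_cases i
        · show Tshift F ω (Gmat F ω 0) ∈ Ccode F ω
          rw [hg0]; exact Submodule.add_mem _ (Submodule.smul_mem _ _ (hgen 0)) (hgen 1)
        · show Tshift F ω (Gmat F ω 1) ∈ Ccode F ω
          rw [hg1]; exact Submodule.add_mem _ (hgen 0) (hgen 2)
        · show Tshift F ω (Gmat F ω 2) ∈ Ccode F ω
          rw [hg2]; exact hgen 0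
        · show Tshift F ω (Gmat F ω 3) ∈ Ccode F ω
          rw [hg3]; exact Submodule.add_mem _ (Submodule.smul_mem _ _ (hgen 3)) (hgen 4)
        · show Tshift F ω (Gmat F ω 4) ∈ Ccode F ω
          rw [hg4]; exact Submodule.smul_mem _ _ (hgen 3)
    | zero => rw [hzero]; exact Submodule.zero_mem _
    | add x y _ _ hx hy => rw [hadd]; exact Submodule.add_mem _ hx hy
    | smul c x _ hx => rw [hsmul]; exact Submodule.smul_mem _ _ hx
  -- Part (ii): linear independence of the rows
  have hli : LinearIndependent F (Gmat F ω) := by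
    rw [Fintype.linearIndependent_iff]
    intro g hg i
    have h := fun k : Fin 10 => congrFun hg k
    fin_cases i
    · simpa [Fin.sum_univ_five, Gmat, Matrix.vecHead, Matrix.vecTail] using h 0
    · simpa [Fin.sum_univ_five, Gmat, Matrix.vecHead, Matrix.vecTail] using h 1
    · simpa [Fin.sum_univ_five, Gmat, Matrix.vecHead, Matrix.vecTail] using h 2
    · simpa [Fin.sum_univ_five, Gmat, Matrix.vecHead, Matrix.vecTail] using h 5
    · simpa [Fin.sum_univ_five, Gmat, Matrix.vecHead, Matrix.vecTail] using h 6
  have part2 : Module.finrank F (Ccode F ω) = 5 := by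
    rw [Ccode, finrank_span_eq_card hli]
    simp
  -- Part (iii)
  have part3 : Ccode F ω ⊓ dualCode F (Ccode F ω) = ⊥ := by
    rw [Submodule.eq_bot_iff]
    intro v hv
    rw [Submodule.mem_inf] at hv
    obtain ⟨hvC, hvD⟩ := hv
    obtain ⟨a, ha⟩ := (Submodule.mem_span_range_iff_exists_fun F).mp hvC
    simp only [dualCode, Submodule.mem_iInf, LinearMap.mem_ker, LinearMap.sum_apply,
      LinearMap.smul_apply, LinearMap.proj_apply, smul_eq_mul] at hvD
    have heq : ∀ j : Fin 5,
        ∑ k : Fin 10, Gmat F ω j k * v k = 0 := fun j => hvD (Gmat F ω j) (hgen j)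
    subst ha
    have eq0 := heq 0
    have eq1 := heq 1
    have eq2 := heq 2
    have eq3 := heq 3
    have eq4 := heq 4
    simp only [sum_univ_ten, Fin.sum_univ_five, Gmat, Finset.sum_apply, Pi.smul_apply,
      smul_eq_mul, Matrix.cons_val_zero, Matrix.cons_val_one, Matrix.head_cons,
      vec10_two, vec10_three, vec10_four, vec10_five, vec10_six, vec10_seven, vec10_eight,
      vec10_nine, vec5_two, vec5_three, vec5_four, Matrix.vecHead, Matrix.vecTail,
      add_zero, zero_mul, mul_zero, zero_add, one_mul, mul_one] at eq0 eq1 eq2 eq3 eq4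
    have ha0 : a 0 = 0 := by
      linear_combination eq1 + (-a 0 + (-1 + ω - ω^2) * a 1 + (ω - ω^2) * a 2) * hω
        + (a 0 - ω * a 2) * h2
    have ha2 : a 2 = 0 := by
      linear_combination ω^2 * eq2 + eq1 + ((-2 + ω - ω^2) * a 0
        + (1 - ω - ω^2 + ω^3 - ω^4) * a 1 + (-1 - ω^2 + ω^3 - ω^4) * a 2) * hω
        + (a 0 - a 1 + a 2) * h2
    have ha1 : a 1 = 0 := by
      linear_combination eq0 + ω^2 * eq1 + eq2 + ((-ω^2) * a 0
        + (-1 + ω - 2*ω^2 + ω^3 - ω^4) * a 1 + (1 - ω - ω^2 + ω^3 - ω^4) * a 2) * hω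
        + ((-2) * a 0 + (1 - ω) * a 1 + (-2) * a 2) * h2
    have ha4 : a 4 = 0 := by
      linear_combination ω * eq3 + ((-2 + 2*ω^2 - 2*ω^3) * a 3 + (1 - ω^2) * a 4) * hω
        + (a 3 - ω * a 4) * h2
    have ha3 : a 3 = 0 := by
      linear_combination ω * eq4 + eq3 + ((1 + 2*ω - 3*ω^2) * a 3 + (1 - 2*ω) * a 4) * hω
        + ((-1 - 2*ω) * a 3 + (-1 - ω) * a 4) * h2
    simp [ha0, ha1, ha2, ha3, ha4, Fin.sum_univ_five]
  exact ⟨part1, part2, part3⟩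
end
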